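/- arXiv:1409.7781 — 2 statements merged into one kernel-verified Lean document; each statement's English description precedes it below -/
import Mathlib

section
/- Let H be a complex Hilbert space with dim H ≥ 2, let T be a nonzero bounded linear operator on H, and let (Tₙ) be a sequence of nonzero bounded linear operators on H with ‖Tₙ − T‖ → 0. Then ε̂(Tₙ) → ε̂(T); that is, the function ε̂ is continuous at every nonzero operator T. -/
/-!
For `T ≠ 0` one has `ε̂(T) = (‖T‖² - m(T)²) / (‖T‖² + m(T)²)` with `m(T)` the minimum modulus;
since `‖·‖` and `m` are `1`-Lipschitz, this expression is continuous away from `0`.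

Upper bound: for `x ⟂ y` we have `‖x + y‖ = ‖x - y‖`, hence `m(T) ‖T (x + y)‖ ≤ ‖T‖ ‖T (x - y)‖`;
rescaling `x` and `y` so that `T x`, `T y` have equal norms and a nonnegative inner product turns
this into the `ε`-AOP inequality.

Lower bound: for orthogonal `u, v` of equal norm, `u + v ⟂ u - v`, and the `ε`-AOP inequality for
this pair gives `‖T u‖² - ‖T v‖² ≤ ε (‖T u‖² + ‖T v‖²)`. Two unit vectors `x, y` lie in the plane
of an orthonormal pair `x, w`, which a unitary rotation carries to an orthonormal pair `y, y'`
with the same value of `‖T ·‖² + ‖T ·‖²`; combining the two estimates gives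
`(1 - ε) ‖T x‖² ≤ (1 + ε) ‖T y‖²`, i.e. `(1 - ε) ‖T‖² ≤ (1 + ε) m(T)²`.
-/

open scoped ComplexInnerProductSpace

noncomputable section

variable {H : Type*} [NormedAddCommGroup H] [InnerProductSpace ℂ H] [CompleteSpace H]

/-- `T` is `ε`-approximately orthogonality preserving: orthogonal vectors are mapped to
`ε`-orthogonal vectors. -/
def IsAOP (T : H →L[ℂ] H) (ε : ℝ) : Prop :=
  ∀ x y : H, ⟪x, y⟫ = 0 → ‖⟪T x, T y⟫‖ ≤ ε * (‖T x‖ * ‖T y‖)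

/-- `ε̂(T)`, the smallest `ε ∈ [0,1]` for which `T` is `ε`-AOP. -/
def epsHat (T : H →L[ℂ] H) : ℝ :=
  sInf {ε : ℝ | 0 ≤ ε ∧ ε ≤ 1 ∧ IsAOP T ε}

/-- The minimum modulus `m(T) = inf {‖T x‖ : ‖x‖ = 1}`. -/
def minMod (T : H →L[ℂ] H) : ℝ :=
  sInf {r : ℝ | ∃ x : H, ‖x‖ = 1 ∧ ‖T x‖ = r}

/-- The set `ℂ𝒱` of scalar multiples of linear isometries of `H`. -/
def scalarIsoms (H : Type*) [NormedAddCommGroup H] [InnerProductSpace ℂ H] :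
    Set (H →L[ℂ] H) :=
  {S | ∃ (c : ℂ) (V : H →L[ℂ] H), (∀ x : H, ‖V x‖ = ‖x‖) ∧ S = c • V}

/-- `dist(T, ℂ𝒱)`. -/
def distCV (T : H →L[ℂ] H) : ℝ := Metric.infDist T (scalarIsoms H)

/-- The set `𝒱` of linear isometries of `H`. -/
def isoms (H : Type*) [NormedAddCommGroup H] [InnerProductSpace ℂ H] :
    Set (H →L[ℂ] H) :=
  {V | ∀ x : H, ‖V x‖ = ‖x‖}

/-- `dist(T, 𝒱)`. -/
def distV (T : H →L[ℂ] H) : ℝ := Metric.infDist T (isoms H)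

open RCLike ComplexConjugate

section InnerProductSpace

variable {𝕜 F : Type*} [RCLike 𝕜] [NormedAddCommGroup F] [InnerProductSpace 𝕜 F]

theorem norm_sq_add_norm_sq_rotate (a b : F) (α β : 𝕜) :
    ‖α • a + β • b‖ ^ 2 + ‖-conj β • a + conj α • b‖ ^ 2 =
      (‖α‖ ^ 2 + ‖β‖ ^ 2) * (‖a‖ ^ 2 + ‖b‖ ^ 2) := by
  simp only [@norm_add_sq 𝕜, norm_smul, inner_smul_left, inner_smul_right, norm_neg, norm_conj,
    map_neg, conj_conj]
  ring_nf
  rw [map_neg]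
  ring

theorem inner_rotate_eq_zero {a b : F} (hab : inner 𝕜 a b = 0) (hnorm : ‖a‖ = ‖b‖) (α β : 𝕜) :
    inner 𝕜 (α • a + β • b) (-conj β • a + conj α • b) = 0 := by
  have hba : inner 𝕜 b a = 0 := inner_eq_zero_symm.mp hab
  simp only [inner_add_left, inner_add_right, inner_smul_left, inner_smul_right, hab, hba,
    inner_self_eq_norm_sq_to_K, hnorm]
  ring

theorem norm_smul_add_smul_sq_of_inner_eq_zero {a b : F} (hab : inner 𝕜 a b = 0)
    (hnorm : ‖a‖ = ‖b‖) (α β : 𝕜) : ‖α • a + β • b‖ ^ 2 = (‖α‖ ^ 2 + ‖β‖ ^ 2) * ‖a‖ ^ 2 := by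
  rw [@norm_add_sq 𝕜, inner_smul_left, inner_smul_right, hab, mul_zero, mul_zero, map_zero,
    norm_smul, norm_smul, hnorm]
  ring

end InnerProductSpace

theorem ContinuousLinearMap.nontrivial_of_ne_zero {R M N : Type*} [Semiring R]
    [TopologicalSpace M] [AddCommMonoid M] [Module R M] [TopologicalSpace N] [AddCommMonoid N]
    [Module R N] {f : M →L[R] N} (hf : f ≠ 0) : Nontrivial M := by
  obtain ⟨x, hx⟩ := DFunLike.ne_iff.mp hf
  exact nontrivial_of_ne x 0 fun h => hx (by simp [h])

variable {E : Type*} [NormedAddCommGroup E] [InnerProductSpace ℂ E]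

namespace ContinuousLinearMap

theorem minMod_nonneg (T : E →L[ℂ] E) : 0 ≤ minMod T :=
  Real.sInf_nonneg <| by rintro r ⟨x, -, rfl⟩; exact norm_nonneg _

theorem minMod_le {T : E →L[ℂ] E} {x : E} (hx : ‖x‖ = 1) : minMod T ≤ ‖T x‖ :=
  csInf_le ⟨0, by rintro r ⟨x, -, rfl⟩; exact norm_nonneg _⟩ ⟨x, hx, rfl⟩

theorem le_minMod [Nontrivial E] {T : E →L[ℂ] E} {c : ℝ} (h : ∀ x : E, ‖x‖ = 1 → c ≤ ‖T x‖) :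
    c ≤ minMod T := by
  obtain ⟨x, hx⟩ := exists_norm_eq E zero_le_one
  exact le_csInf ⟨_, x, hx, rfl⟩ <| by rintro r ⟨x, hx, rfl⟩; exact h x hx

theorem minMod_le_opNorm [Nontrivial E] (T : E →L[ℂ] E) : minMod T ≤ ‖T‖ := by
  obtain ⟨x, hx⟩ := exists_norm_eq E zero_le_one
  simpa [hx] using (minMod_le hx).trans (T.le_opNorm x)

theorem minMod_mul_norm_le (T : E →L[ℂ] E) (z : E) : minMod T * ‖z‖ ≤ ‖T z‖ := by
  rcases eq_or_ne z 0 with rfl | hz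
  · simp
  have hz' : 0 < ‖z‖ := norm_pos_iff.mpr hz
  have h := minMod_le (T := T) (x := (‖z‖⁻¹ : ℝ) • z) (by simp [norm_smul, hz'.ne'])
  rwa [T.map_smul_of_tower, norm_smul, norm_inv, norm_norm, le_inv_mul_iff₀ hz', mul_comm] at h

theorem mul_opNorm_le_mul_minMod [Nontrivial E] {T : E →L[ℂ] E} {p q : ℝ} (hp : 0 ≤ p)
    (hq : 0 < q) (h : ∀ x y : E, ‖x‖ = 1 → ‖y‖ = 1 → p * ‖T x‖ ≤ q * ‖T y‖) :
    p * ‖T‖ ≤ q * minMod T := by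
  rw [← div_le_iff₀' hq]
  refine le_minMod fun y hy => ?_
  rw [div_le_iff₀' hq, ← Real.norm_of_nonneg hp, ← norm_smul]
  refine opNorm_le_of_unit_norm (by positivity) fun x hx => ?_
  rw [smul_apply, norm_smul, Real.norm_of_nonneg hp]
  exact h x y hx hy

theorem minMod_lipschitz [Nontrivial E] : LipschitzWith 1 (minMod : (E →L[ℂ] E) → ℝ) := by
  refine LipschitzWith.of_le_add fun S T => ?_
  suffices minMod S - dist S T ≤ minMod T by linarith
  refine le_minMod fun x hx => ?_
  calc minMod S - dist S T ≤ ‖S x‖ - ‖S - T‖ * ‖x‖ := by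
        rw [dist_eq_norm, hx, mul_one]; linarith [minMod_le (T := S) hx]
    _ ≤ ‖S x‖ - ‖S x - T x‖ := by
        rw [← sub_apply]; linarith [(S - T).le_opNorm x]
    _ ≤ ‖T x‖ := by linarith [norm_le_norm_add_norm_sub' (S x) (T x)]

theorem two_mul_re_inner_mul_le (T : E →L[ℂ] E) {x y : E} (hxy : ⟪x, y⟫ = 0) :
    2 * re ⟪T x, T y⟫ * (‖T‖ ^ 2 + minMod T ^ 2) ≤
      (‖T‖ ^ 2 - minMod T ^ 2) * (‖T x‖ ^ 2 + ‖T y‖ ^ 2) := by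
  have hρ : ‖x - y‖ = ‖x + y‖ := norm_sub_eq_norm_add (inner_eq_zero_symm.mp hxy)
  have h : minMod T * ‖T (x + y)‖ ≤ ‖T‖ * ‖T (x - y)‖ :=
    calc minMod T * ‖T (x + y)‖ ≤ minMod T * (‖T‖ * ‖x + y‖) :=
          mul_le_mul_of_nonneg_left (T.le_opNorm _) T.minMod_nonneg
      _ = ‖T‖ * (minMod T * ‖x - y‖) := by rw [hρ]; ring
      _ ≤ ‖T‖ * ‖T (x - y)‖ := mul_le_mul_of_nonneg_left (T.minMod_mul_norm_le _) (norm_nonneg _)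
  have h2 := pow_le_pow_left₀ (mul_nonneg T.minMod_nonneg (norm_nonneg _)) h 2
  rw [mul_pow, mul_pow, map_add, map_sub, @norm_add_sq ℂ, @norm_sub_sq ℂ] at h2
  linarith

theorem isAOP_opNorm_minMod_ratio (T : E →L[ℂ] E) :
    IsAOP T ((‖T‖ ^ 2 - minMod T ^ 2) / (‖T‖ ^ 2 + minMod T ^ 2)) := by
  intro x y hxy
  rcases eq_or_ne (T x) 0 with hx | hx
  · simp [hx]
  rcases eq_or_ne (T y) 0 with hy | hy
  · simp [hy]
  have hK : 0 < ‖T‖ ^ 2 + minMod T ^ 2 := by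
    have : 0 < ‖T‖ := norm_pos_iff.mpr fun h => hx (by simp [h])
    positivity
  have hu : 0 < ‖T x‖ := norm_pos_iff.mpr hx
  have hv : 0 < ‖T y‖ := norm_pos_iff.mpr hy
  obtain ⟨ζ, hζ, hζg⟩ := Complex.exists_norm_eq_mul_self ⟪T x, T y⟫
  -- rescale so that `T x` and `T y` have equal norms and a nonnegative inner product
  have h := T.two_mul_re_inner_mul_le (x := (‖T y‖ : ℂ) • x) (y := ((‖T x‖ : ℂ) * ζ) • y)
    (by rw [inner_smul_left, inner_smul_right, hxy, mul_zero, mul_zero])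
  have hre : (‖T x‖ : ℂ) * ζ * conj (‖T y‖ : ℂ) * ⟪T x, T y⟫ =
      ((‖T x‖ * ‖T y‖ * ‖⟪T x, T y⟫‖ : ℝ) : ℂ) := by
    rw [Complex.conj_ofReal]
    push_cast
    rw [hζg]
    ring
  simp only [map_smul, inner_smul_left, inner_smul_right, norm_smul, Complex.norm_real, norm_norm,
    norm_mul, hζ, mul_one, ← mul_assoc, hre, re_to_complex, Complex.ofReal_re] at h
  rw [div_mul_eq_mul_div, le_div_iff₀ hK]
  refine le_of_mul_le_mul_left ?_ (by positivity : 0 < 2 * (‖T x‖ * ‖T y‖))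
  linarith

end ContinuousLinearMap

namespace IsAOP

variable {T : E →L[ℂ] E} {ε : ℝ}

theorem sq_norm_sub_sq_norm_le (hε : 0 ≤ ε) (hT : IsAOP T ε) {u v : E} (huv : ⟪u, v⟫ = 0)
    (hnorm : ‖u‖ = ‖v‖) : ‖T u‖ ^ 2 - ‖T v‖ ^ 2 ≤ ε * (‖T u‖ ^ 2 + ‖T v‖ ^ 2) := by
  have hvu : ⟪v, u⟫ = 0 := inner_eq_zero_symm.mp huv
  have horth : ⟪u + v, u - v⟫ = 0 := by
    simp only [inner_add_left, inner_sub_right, huv, hvu, inner_self_eq_norm_sq_to_K, hnorm]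
    ring
  have hre : re ⟪T u + T v, T u - T v⟫ = ‖T u‖ ^ 2 - ‖T v‖ ^ 2 := by
    simp only [inner_add_left, inner_sub_right, map_add, map_sub, inner_self_eq_norm_sq,
      inner_re_symm (T v) (T u)]
    ring
  have hamgm : ‖T u + T v‖ * ‖T u - T v‖ ≤ ‖T u‖ ^ 2 + ‖T v‖ ^ 2 := by
    nlinarith [sq_nonneg (‖T u + T v‖ - ‖T u - T v‖), parallelogram_law_with_norm ℂ (T u) (T v)]
  calc ‖T u‖ ^ 2 - ‖T v‖ ^ 2 ≤ ‖⟪T u + T v, T u - T v⟫‖ := hre ▸ re_le_norm _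
    _ ≤ ε * (‖T u + T v‖ * ‖T u - T v‖) := by simpa using hT _ _ horth
    _ ≤ ε * (‖T u‖ ^ 2 + ‖T v‖ ^ 2) := mul_le_mul_of_nonneg_left hamgm hε

theorem one_sub_mul_sq_norm_le_of_orthogonal (hε : 0 ≤ ε) (hε1 : ε ≤ 1) (hT : IsAOP T ε)
    {x w : E} (hxw : ⟪x, w⟫ = 0) (hnorm : ‖x‖ = ‖w‖) {α β : ℂ} (hαβ : ‖α‖ ^ 2 + ‖β‖ ^ 2 = 1) :
    (1 - ε) * ‖T x‖ ^ 2 ≤ (1 + ε) * ‖T (α • x + β • w)‖ ^ 2 := by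
  set y := α • x + β • w
  set y' := -conj β • x + conj α • w
  have hy'y : ⟪y', y⟫ = 0 := inner_eq_zero_symm.mp (inner_rotate_eq_zero hxw hnorm α β)
  have hnorm' : ‖y'‖ = ‖y‖ := by
    rw [← sq_eq_sq₀ (norm_nonneg _) (norm_nonneg _),
      norm_smul_add_smul_sq_of_inner_eq_zero hxw hnorm,
      norm_smul_add_smul_sq_of_inner_eq_zero hxw hnorm, norm_neg, norm_conj, norm_conj, add_comm]
  have htrace : ‖T y‖ ^ 2 + ‖T y'‖ ^ 2 = ‖T x‖ ^ 2 + ‖T w‖ ^ 2 := by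
    simp only [y, y', map_add, map_smul]
    rw [norm_sq_add_norm_sq_rotate, hαβ, one_mul]
  have hx := hT.sq_norm_sub_sq_norm_le hε hxw hnorm
  have hy := hT.sq_norm_sub_sq_norm_le hε hy'y hnorm'
  rw [add_comm (‖T y'‖ ^ 2), htrace] at hy
  have hx' : 2 * ‖T x‖ ^ 2 ≤ (1 + ε) * (‖T x‖ ^ 2 + ‖T w‖ ^ 2) := by linarith
  have hy' : (1 - ε) * (‖T x‖ ^ 2 + ‖T w‖ ^ 2) ≤ 2 * ‖T y‖ ^ 2 := by linarith
  nlinarith [mul_le_mul_of_nonneg_left hx' (sub_nonneg.mpr hε1),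
    mul_le_mul_of_nonneg_left hy' (by linarith : 0 ≤ 1 + ε)]

theorem one_sub_mul_sq_norm_le (hε : 0 ≤ ε) (hε1 : ε ≤ 1) (hT : IsAOP T ε) {x y : E}
    (hx : ‖x‖ = 1) (hy : ‖y‖ = 1) : (1 - ε) * ‖T x‖ ^ 2 ≤ (1 + ε) * ‖T y‖ ^ 2 := by
  set α := ⟪x, y⟫
  set z := y - α • x
  have hxz : ⟪x, z⟫ = 0 := by simp [z, α, inner_self_eq_norm_sq_to_K, hx]
  rcases eq_or_ne z 0 with hz | hz
  · have hyx : y = α • x := sub_eq_zero.mp hz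
    have hα : ‖α‖ = 1 := by simpa [hx, hy, norm_smul] using (congrArg norm hyx).symm
    have hTy : ‖T y‖ = ‖T x‖ := by rw [hyx, map_smul, norm_smul, hα, one_mul]
    rw [hTy]
    nlinarith [sq_nonneg ‖T x‖]
  set β : ℂ := (‖z‖ : ℂ)
  have hβ : β ≠ 0 := Complex.ofReal_ne_zero.mpr (norm_ne_zero_iff.mpr hz)
  have hyxw : y = α • x + β • (β⁻¹ • z) := by rw [smul_inv_smul₀ hβ, add_sub_cancel]
  have hw : ‖β⁻¹ • z‖ = 1 := by simp [β, norm_smul, hz]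
  have hαβ : ‖α‖ ^ 2 + ‖β‖ ^ 2 = 1 := by
    have h := norm_add_sq_eq_norm_sq_add_norm_sq_of_inner_eq_zero (α • x) z
      (by rw [inner_smul_left, hxz, mul_zero])
    rw [add_sub_cancel, hy, norm_smul, hx] at h
    simp only [β, Complex.norm_real, norm_norm]
    linarith
  rw [hyxw]
  exact hT.one_sub_mul_sq_norm_le_of_orthogonal hε hε1
    (by rw [inner_smul_right, hxz, mul_zero]) (hx.trans hw.symm) hαβ

theorem one_sub_mul_sq_opNorm_le [Nontrivial E] (hε : 0 ≤ ε) (hε1 : ε ≤ 1) (hT : IsAOP T ε) :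
    (1 - ε) * ‖T‖ ^ 2 ≤ (1 + ε) * minMod T ^ 2 := by
  have hsq {a : ℝ} (ha : 0 ≤ a) (c : ℝ) : (√a * c) ^ 2 = a * c ^ 2 := by
    rw [mul_pow, Real.sq_sqrt ha]
  have hsub : 0 ≤ 1 - ε := sub_nonneg.mpr hε1
  have hadd : 0 ≤ 1 + ε := by linarith
  have key : √(1 - ε) * ‖T‖ ≤ √(1 + ε) * minMod T := by
    refine ContinuousLinearMap.mul_opNorm_le_mul_minMod (Real.sqrt_nonneg _)
      (Real.sqrt_pos.mpr (by linarith)) fun x y hx hy => ?_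
    rw [← pow_le_pow_iff_left₀ (by positivity) (by positivity) two_ne_zero, hsq hsub, hsq hadd]
    exact hT.one_sub_mul_sq_norm_le hε hε1 hx hy
  simpa only [hsq hsub, hsq hadd] using pow_le_pow_left₀ (by positivity) key 2

end IsAOP

theorem epsHat_eq {T : E →L[ℂ] E} (hT : T ≠ 0) :
    epsHat T = (‖T‖ ^ 2 - minMod T ^ 2) / (‖T‖ ^ 2 + minMod T ^ 2) := by
  have := ContinuousLinearMap.nontrivial_of_ne_zero hT
  have hm := T.minMod_le_opNorm
  have hm₀ := T.minMod_nonneg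
  have hK : 0 < ‖T‖ ^ 2 + minMod T ^ 2 := by
    have : 0 < ‖T‖ := norm_pos_iff.mpr hT
    positivity
  refine IsLeast.csInf_eq ⟨⟨?_, ?_, T.isAOP_opNorm_minMod_ratio⟩, ?_⟩
  · exact div_nonneg (by nlinarith) hK.le
  · exact (div_le_one hK).mpr (by nlinarith)
  · rintro ε ⟨hε, hε1, hAOP⟩
    rw [div_le_iff₀ hK]
    linarith [hAOP.one_sub_mul_sq_opNorm_le hε hε1]

theorem continuousAt_epsHat {T : E →L[ℂ] E} (hT : T ≠ 0) : ContinuousAt epsHat T := by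
  have := ContinuousLinearMap.nontrivial_of_ne_zero hT
  have hK : ‖T‖ ^ 2 + minMod T ^ 2 ≠ 0 := by
    have : 0 < ‖T‖ := norm_pos_iff.mpr hT
    positivity
  have hm := ContinuousLinearMap.minMod_lipschitz (E := E).continuous
  have hformula : ContinuousAt
      (fun S : E →L[ℂ] E => (‖S‖ ^ 2 - minMod S ^ 2) / (‖S‖ ^ 2 + minMod S ^ 2)) T :=
    (((continuous_norm.pow 2).sub (hm.pow 2)).continuousAt).div
      (((continuous_norm.pow 2).add (hm.pow 2)).continuousAt) hK
  refine hformula.congr ?_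
  filter_upwards [isOpen_ne.mem_nhds hT] with S hS using (epsHat_eq hS).symm

theorem epsHat_continuous_general (T : H →L[ℂ] H) (hT : T ≠ 0)
    (Tn : ℕ → H →L[ℂ] H)
    (hconv : Filter.Tendsto (fun n => ‖Tn n - T‖) Filter.atTop (nhds 0)) :
    Filter.Tendsto (fun n => epsHat (Tn n)) Filter.atTop (nhds (epsHat T)) :=
  (continuousAt_epsHat hT).tendsto.comp (tendsto_iff_norm_sub_tendsto_zero.mpr hconv)

/-- `ε̂` is continuous at every nonzero operator. -/
theorem epsHat_continuous (hdim : 2 ≤ Module.rank ℂ H) (T : H →L[ℂ] H) (hT : T ≠ 0)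
    (Tn : ℕ → H →L[ℂ] H) (hTn : ∀ n, Tn n ≠ 0)
    (hconv : Filter.Tendsto (fun n => ‖Tn n - T‖) Filter.atTop (nhds 0)) :
    Filter.Tendsto (fun n => epsHat (Tn n)) Filter.atTop (nhds (epsHat T)) :=
  epsHat_continuous_general T hT Tn hconv
end
end

section
/- Let H be a complex Hilbert space with dim H ≥ 2 and let T be a bounded linear operator on H with m(T) > 0. Then for every δ > 0 there exist unit vectors x, y ∈ H with ⟨x,y⟩ = 0 and |⟨Tx,Ty⟩| > ((‖T‖² − m(T)²)/(‖T‖² + m(T)²) − δ) · ‖Tx‖‖Ty‖; consequently ε̂(T) ≥ (‖T‖² − m(T)²)/(‖T‖² + m(T)²). -/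
open scoped ComplexInnerProductSpace

noncomputable section

variable {H : Type*} [NormedAddCommGroup H] [InnerProductSpace ℂ H] [CompleteSpace H]

/-!
Write `q x = ‖T x‖²`. If `e, f` are orthonormal, so are `x, y = (e ± f)/√2`; the real part of
`⟪T x, T y⟫` is `(q e - q f)/2`, and by the parallelogram law `‖T x‖ ‖T y‖ ≤ (q e + q f)/2`.
Hence `|⟪T x, T y⟫| / (‖T x‖ ‖T y‖) ≥ (q e - q f)/(q e + q f)`, and it suffices to find
orthonormal pairs with `q e → ‖T‖²` and `q f → m(T)²`.

For `e` take an almost norming unit vector `u`. It is an approximate eigenvector of `T†T` for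
the eigenvalue `‖T‖²`, so `⟪T u, T w⟫` is small for every unit `w ⊥ u`. Consequently, if `v` is
an almost minimizing unit vector and `f` is the normalized component of `v` orthogonal to `u`,
then `q f` exceeds `q v` only by a small amount.
-/

open Filter Topology RCLike
open scoped InnerProductSpace InnerProduct

section InnerProductSpace

variable {𝕜 E F : Type*} [RCLike 𝕜] [NormedAddCommGroup E] [InnerProductSpace 𝕜 E]
  [NormedAddCommGroup F] [InnerProductSpace 𝕜 F]

theorem norm_sq_sub_norm_sq_mul_le (x y : F) :
    (‖x‖ ^ 2 - ‖y‖ ^ 2) * (‖x + y‖ * ‖x - y‖) ≤ (‖x‖ ^ 2 + ‖y‖ ^ 2) * ‖⟪x + y, x - y⟫_𝕜‖ := by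
  have hprod : ‖x + y‖ * ‖x - y‖ ≤ ‖x‖ ^ 2 + ‖y‖ ^ 2 := by
    nlinarith [parallelogram_law_with_norm 𝕜 x y, sq_nonneg (‖x + y‖ - ‖x - y‖)]
  have hre : re ⟪x + y, x - y⟫_𝕜 = ‖x‖ ^ 2 - ‖y‖ ^ 2 := by
    simp only [inner_add_left, inner_sub_right, map_add, map_sub, inner_re_symm y x,
      inner_self_eq_norm_sq (𝕜 := 𝕜)]
    ring
  have hinner : ‖x‖ ^ 2 - ‖y‖ ^ 2 ≤ ‖⟪x + y, x - y⟫_𝕜‖ := hre ▸ re_le_norm _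
  rcases le_total (‖x‖ ^ 2 - ‖y‖ ^ 2) 0 with hneg | hpos
  · exact (mul_nonpos_of_nonpos_of_nonneg hneg (by positivity)).trans (by positivity)
  · calc (‖x‖ ^ 2 - ‖y‖ ^ 2) * (‖x + y‖ * ‖x - y‖)
        ≤ (‖x‖ ^ 2 - ‖y‖ ^ 2) * (‖x‖ ^ 2 + ‖y‖ ^ 2) := by gcongr
      _ ≤ ‖⟪x + y, x - y⟫_𝕜‖ * (‖x‖ ^ 2 + ‖y‖ ^ 2) := by gcongr
      _ = _ := mul_comm _ _

theorem inner_add_sub_eq_zero_of_norm_eq {x y : E} (h : ‖x‖ = ‖y‖) (hxy : ⟪x, y⟫_𝕜 = 0) :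
    ⟪x + y, x - y⟫_𝕜 = 0 := by
  have hyx : ⟪y, x⟫_𝕜 = 0 := inner_eq_zero_symm.mp hxy
  simp only [inner_add_left, inner_sub_right, hxy, hyx, inner_self_eq_norm_sq_to_K, h]
  ring

theorem ContinuousLinearMap.exists_orthonormal_norm_sq_sub_mul_le (T : E →L[𝕜] F) {e f : E}
    (he : ‖e‖ = 1) (hf : ‖f‖ = 1) (hef : ⟪e, f⟫_𝕜 = 0) :
    ∃ x y : E, ‖x‖ = 1 ∧ ‖y‖ = 1 ∧ ⟪x, y⟫_𝕜 = 0 ∧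
      (‖T e‖ ^ 2 - ‖T f‖ ^ 2) * (‖T x‖ * ‖T y‖) ≤ (‖T e‖ ^ 2 + ‖T f‖ ^ 2) * ‖⟪T x, T y⟫_𝕜‖ := by
  set s : ℝ := (√2)⁻¹
  have hs : 0 < s := by positivity
  have hnorm_smul : ∀ v : E, ‖v‖ ^ 2 = 2 → ‖(s : 𝕜) • v‖ = 1 := fun v hv => by
    rw [norm_smul, norm_ofReal, abs_of_pos hs, ← Real.sqrt_sq (norm_nonneg v), hv,
      inv_mul_cancel₀ (by positivity)]
  have hsmul_apply : ∀ v : E, ‖T ((s : 𝕜) • v)‖ = s * ‖T v‖ := fun v => by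
    rw [map_smul, norm_smul, norm_ofReal, abs_of_pos hs]
  refine ⟨(s : 𝕜) • (e + f), (s : 𝕜) • (e - f), hnorm_smul _ ?_, hnorm_smul _ ?_, ?_, ?_⟩
  · rw [@norm_add_sq 𝕜, hef, he, hf]; norm_num
  · rw [@norm_sub_sq 𝕜, hef, he, hf]; norm_num
  · rw [inner_smul_real_left, inner_smul_real_right,
      inner_add_sub_eq_zero_of_norm_eq (he.trans hf.symm) hef, smul_zero, smul_zero]
  · rw [hsmul_apply, hsmul_apply, map_smul, map_smul, inner_smul_real_left,
      inner_smul_real_right, smul_smul, norm_smul, Real.norm_eq_abs, abs_of_pos (by positivity),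
      map_add, map_sub]
    calc (‖T e‖ ^ 2 - ‖T f‖ ^ 2) * (s * ‖T e + T f‖ * (s * ‖T e - T f‖))
        = (s * s) * ((‖T e‖ ^ 2 - ‖T f‖ ^ 2) * (‖T e + T f‖ * ‖T e - T f‖)) := by ring
      _ ≤ (s * s) * ((‖T e‖ ^ 2 + ‖T f‖ ^ 2) * ‖⟪T e + T f, T e - T f⟫_𝕜‖) :=
        mul_le_mul_of_nonneg_left (norm_sq_sub_norm_sq_mul_le _ _) (by positivity)
      _ = _ := by ring

theorem ContinuousLinearMap.norm_adjoint_comp_self_apply_sub_sq_le [CompleteSpace E]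
    [CompleteSpace F] (T : E →L[𝕜] F) {u : E} (hu : ‖u‖ = 1) :
    ‖(T† ∘L T) u - ((‖T‖ ^ 2 : ℝ) : 𝕜) • u‖ ^ 2 ≤ 2 * ‖T‖ ^ 2 * (‖T‖ ^ 2 - ‖T u‖ ^ 2) := by
  have hA : ‖(T† ∘L T) u‖ ≤ ‖T‖ ^ 2 := by
    simpa [hu, ContinuousLinearMap.norm_adjoint_comp_self, sq] using (T† ∘L T).le_opNorm u
  have hre : re ⟪(T† ∘L T) u, ((‖T‖ ^ 2 : ℝ) : 𝕜) • u⟫_𝕜 = ‖T‖ ^ 2 * ‖T u‖ ^ 2 := by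
    rw [inner_smul_real_right, ContinuousLinearMap.comp_apply,
      ContinuousLinearMap.adjoint_inner_left, real_smul_eq_coe_mul, re_ofReal_mul,
      inner_self_eq_norm_sq]
  rw [@norm_sub_sq 𝕜, hre, norm_smul, norm_ofReal, hu, mul_one, abs_of_nonneg (by positivity)]
  nlinarith [norm_nonneg ((T† ∘L T) u)]

theorem ContinuousLinearMap.norm_inner_apply_apply_sq_le [CompleteSpace E] [CompleteSpace F]
    (T : E →L[𝕜] F) {u w : E} (hu : ‖u‖ = 1) (huw : ⟪u, w⟫_𝕜 = 0) :
    ‖⟪T u, T w⟫_𝕜‖ ^ 2 ≤ 2 * ‖T‖ ^ 2 * (‖T‖ ^ 2 - ‖T u‖ ^ 2) * ‖w‖ ^ 2 := by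
  have h : ⟪T u, T w⟫_𝕜 = ⟪(T† ∘L T) u - ((‖T‖ ^ 2 : ℝ) : 𝕜) • u, w⟫_𝕜 := by
    rw [inner_sub_left, inner_smul_real_left, huw, smul_zero, sub_zero,
      ContinuousLinearMap.comp_apply, ContinuousLinearMap.adjoint_inner_left]
  rw [h]
  calc ‖⟪(T† ∘L T) u - ((‖T‖ ^ 2 : ℝ) : 𝕜) • u, w⟫_𝕜‖ ^ 2
      ≤ (‖(T† ∘L T) u - ((‖T‖ ^ 2 : ℝ) : 𝕜) • u‖ * ‖w‖) ^ 2 := by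
        gcongr; exact norm_inner_le_norm _ _
    _ ≤ 2 * ‖T‖ ^ 2 * (‖T‖ ^ 2 - ‖T u‖ ^ 2) * ‖w‖ ^ 2 := by
        rw [mul_pow]; gcongr; exact T.norm_adjoint_comp_self_apply_sub_sq_le hu

theorem exists_norm_eq_one_inner_eq_zero (h : 2 ≤ Module.rank 𝕜 E) (u : E) :
    ∃ f : E, ‖f‖ = 1 ∧ ⟪u, f⟫_𝕜 = 0 := by
  have hne : (𝕜 ∙ u)ᗮ ≠ ⊥ := by
    rw [Ne, Submodule.orthogonal_eq_bot_iff]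
    intro htop
    have : Module.rank 𝕜 E ≤ 1 := by
      rw [← rank_top 𝕜 E, ← htop]
      simpa using rank_span_le (R := 𝕜) {u}
    exact absurd (h.trans this) (by norm_num)
  obtain ⟨f, hf, hf0⟩ := Submodule.exists_mem_ne_zero_of_ne_bot hne
  refine ⟨(‖f‖⁻¹ : 𝕜) • f, norm_smul_inv_norm hf0, ?_⟩
  rw [inner_smul_right, Submodule.mem_orthogonal_singleton_iff_inner_right.mp hf, mul_zero]

theorem exists_eq_smul_add_smul_of_norm_eq_one (h : 2 ≤ Module.rank 𝕜 E) {u : E}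
    (hu : ‖u‖ = 1) (v : E) :
    ∃ f : E, ‖f‖ = 1 ∧ ⟪u, f⟫_𝕜 = 0 ∧ ∃ (c : 𝕜) (t : ℝ), v = c • u + (t : 𝕜) • f := by
  set w := v - ⟪u, v⟫_𝕜 • u with hw_def
  have hvw : v = ⟪u, v⟫_𝕜 • u + w := by rw [hw_def, add_sub_cancel]
  by_cases hw : w = 0
  · obtain ⟨f, hf, huf⟩ := exists_norm_eq_one_inner_eq_zero h u
    exact ⟨f, hf, huf, ⟪u, v⟫_𝕜, 0, by
      rw [ofReal_zero, zero_smul, add_zero]; exact sub_eq_zero.mp hw⟩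
  have huw : ⟪u, w⟫_𝕜 = 0 := by
    rw [hw_def, inner_sub_right, inner_smul_right, inner_self_eq_norm_sq_to_K, hu]
    simp
  refine ⟨(‖w‖⁻¹ : 𝕜) • w, norm_smul_inv_norm hw, by rw [inner_smul_right, huw, mul_zero],
    ⟪u, v⟫_𝕜, ‖w‖, ?_⟩
  rw [smul_smul, mul_inv_cancel₀ (ofReal_ne_zero.mpr (norm_ne_zero_iff.mpr hw)), one_smul, ← hvw]

theorem ContinuousLinearMap.norm_apply_sq_le_of_orthonormal (T : E →L[𝕜] F) {u f : E}
    (hu : ‖u‖ = 1) (hf : ‖f‖ = 1) (huf : ⟪u, f⟫_𝕜 = 0) {c : 𝕜} {t : ℝ}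
    (hv : ‖c • u + (t : 𝕜) • f‖ = 1) :
    ‖T f‖ ^ 2 ≤ ‖T (c • u + (t : 𝕜) • f)‖ ^ 2 + (‖T‖ ^ 2 - ‖T u‖ ^ 2) + 2 * ‖⟪T u, T f⟫_𝕜‖ := by
  have hct : ‖c‖ ^ 2 + t ^ 2 = 1 := by
    have := norm_add_sq_eq_norm_sq_add_norm_sq_of_inner_eq_zero (c • u) ((t : 𝕜) • f)
      (by rw [inner_smul_left, inner_smul_right, huf, mul_zero, mul_zero])
    rw [hv, norm_smul, norm_smul, hu, hf, norm_ofReal] at this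
    nlinarith [sq_abs t]
  have hcross : -‖⟪T u, T f⟫_𝕜‖ ≤ re ⟪c • T u, (t : 𝕜) • T f⟫_𝕜 := by
    have hnorm : ‖⟪c • T u, (t : 𝕜) • T f⟫_𝕜‖ = ‖c‖ * |t| * ‖⟪T u, T f⟫_𝕜‖ := by
      rw [inner_smul_left, inner_smul_right, norm_mul, norm_mul, norm_conj, norm_ofReal,
        mul_assoc]
    have hc : ‖c‖ ≤ 1 := by nlinarith [norm_nonneg c, sq_nonneg t]
    have ht : |t| ≤ 1 := by nlinarith [abs_nonneg t, sq_abs t, norm_nonneg c]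
    have := (abs_le.mp ((abs_re_le_norm _).trans hnorm.le)).1
    nlinarith [norm_nonneg ⟪T u, T f⟫_𝕜, mul_le_one₀ hc (abs_nonneg t) ht, norm_nonneg c,
      abs_nonneg t]
  have hTu : ‖T u‖ ≤ ‖T‖ := by simpa [hu] using T.le_opNorm u
  have hTf : ‖T f‖ ≤ ‖T‖ := by simpa [hf] using T.le_opNorm f
  rw [map_add, map_smul, map_smul, @norm_add_sq 𝕜, norm_smul, norm_smul, norm_ofReal]
  have hTu2 := pow_le_pow_left₀ (norm_nonneg _) hTu 2
  have hTf2 := pow_le_pow_left₀ (norm_nonneg _) hTf 2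
  nlinarith [sq_abs t, mul_nonneg (sq_nonneg t) (sub_nonneg.mpr hTu2),
    mul_nonneg (sq_nonneg ‖c‖) (sub_nonneg.mpr hTf2)]

theorem ContinuousLinearMap.exists_seq_norm_apply_tendsto_opNorm [Nontrivial E]
    (T : E →L[𝕜] F) :
    ∃ u : ℕ → E, (∀ n, ‖u n‖ = 1) ∧ Tendsto (fun n => ‖T (u n)‖) atTop (𝓝 ‖T‖) := by
  obtain ⟨x, hx⟩ := exists_ne (0 : E)
  have hne : ((fun x => ‖T x‖) '' Metric.sphere (0 : E) 1).Nonempty :=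
    ⟨_, _, mem_sphere_zero_iff_norm.mpr (norm_smul_inv_norm (𝕜 := 𝕜) hx), rfl⟩
  have hbdd : BddAbove ((fun x => ‖T x‖) '' Metric.sphere (0 : E) 1) := by
    refine ⟨‖T‖, ?_⟩
    rintro _ ⟨x, hx, rfl⟩
    simpa [mem_sphere_zero_iff_norm.mp hx] using T.le_opNorm x
  obtain ⟨r, -, hr, hrS⟩ := exists_seq_tendsto_sSup hne hbdd
  choose u hu hTu using hrS
  refine ⟨u, fun n => mem_sphere_zero_iff_norm.mp (hu n), ?_⟩
  rw [← T.sSup_sphere_eq_norm]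
  exact hr.congr fun n => (hTu n).symm

end InnerProductSpace

section MinimumModulus

variable {E : Type*} [NormedAddCommGroup E] [InnerProductSpace ℂ E]

theorem minMod_nonneg (T : E →L[ℂ] E) : 0 ≤ minMod T :=
  Real.sInf_nonneg fun _ ⟨_, _, hr⟩ => hr ▸ norm_nonneg _

theorem minMod_le_norm_apply (T : E →L[ℂ] E) {x : E} (hx : ‖x‖ = 1) : minMod T ≤ ‖T x‖ :=
  csInf_le ⟨0, fun _ ⟨_, _, hr⟩ => hr ▸ norm_nonneg _⟩ ⟨x, hx, rfl⟩

theorem exists_seq_norm_apply_tendsto_minMod [Nontrivial E] (T : E →L[ℂ] E) :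
    ∃ v : ℕ → E, (∀ n, ‖v n‖ = 1) ∧ Tendsto (fun n => ‖T (v n)‖) atTop (𝓝 (minMod T)) := by
  obtain ⟨x, hx⟩ := exists_ne (0 : E)
  have hne : {r : ℝ | ∃ x : E, ‖x‖ = 1 ∧ ‖T x‖ = r}.Nonempty :=
    ⟨_, _, norm_smul_inv_norm (𝕜 := ℂ) hx, rfl⟩
  obtain ⟨r, -, hr, hrS⟩ := exists_seq_tendsto_sInf hne ⟨0, fun _ ⟨_, _, hr⟩ => hr ▸ norm_nonneg _⟩
  choose v hv hTv using hrS
  exact ⟨v, hv, hr.congr fun n => (hTv n).symm⟩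

theorem opNorm_sq_minMod_sq_mem_closure [CompleteSpace E] (hdim : 2 ≤ Module.rank ℂ E)
    (T : E →L[ℂ] E) :
    (‖T‖ ^ 2, minMod T ^ 2) ∈ closure {p : ℝ × ℝ | ∃ e f : E, ‖e‖ = 1 ∧ ‖f‖ = 1 ∧ ⟪e, f⟫ = 0 ∧
      p = (‖T e‖ ^ 2, ‖T f‖ ^ 2)} := by
  have : Nontrivial E := rank_pos_iff_nontrivial.mp (lt_of_lt_of_le (by norm_num) hdim)
  obtain ⟨u, hu, hTu⟩ := T.exists_seq_norm_apply_tendsto_opNorm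
  obtain ⟨v, hv, hTv⟩ := exists_seq_norm_apply_tendsto_minMod T
  choose f hf huf c t hvf using fun n => exists_eq_smul_add_smul_of_norm_eq_one hdim (hu n) (v n)
  set η := fun n => ‖T‖ ^ 2 - ‖T (u n)‖ ^ 2
  have hη : Tendsto η atTop (𝓝 0) := by
    rw [← sub_self (‖T‖ ^ 2)]
    exact tendsto_const_nhds.sub (hTu.pow 2)
  have hcross : ∀ n, ‖⟪T (u n), T (f n)⟫‖ ≤ √(2 * ‖T‖ ^ 2 * η n) := fun n =>
    Real.le_sqrt_of_sq_le (by simpa [hf n] using T.norm_inner_apply_apply_sq_le (hu n) (huf n))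
  have hupper : Tendsto (fun n => ‖T (v n)‖ ^ 2 + η n + 2 * √(2 * ‖T‖ ^ 2 * η n)) atTop
      (𝓝 (minMod T ^ 2)) := by
    simpa only [mul_zero, Real.sqrt_zero, add_zero] using
      ((hTv.pow 2).add hη).add ((hη.const_mul (2 * ‖T‖ ^ 2)).sqrt.const_mul 2)
  have hTf : Tendsto (fun n => ‖T (f n)‖ ^ 2) atTop (𝓝 (minMod T ^ 2)) := by
    refine tendsto_of_tendsto_of_tendsto_of_le_of_le tendsto_const_nhds hupper
      (fun n => pow_le_pow_left₀ (minMod_nonneg T) (minMod_le_norm_apply T (hf n)) 2)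
      (fun n => ?_)
    have := T.norm_apply_sq_le_of_orthonormal (hu n) (hf n) (huf n) (hvf n ▸ hv n)
    rw [← hvf n] at this
    linarith [hcross n]
  exact mem_closure_of_tendsto ((hTu.pow 2).prodMk_nhds hTf)
    (Eventually.of_forall fun n => ⟨u n, f n, hu n, hf n, huf n, rfl⟩)

theorem isAOP_one (T : E →L[ℂ] E) : IsAOP T 1 := fun x y _ => by
  rw [one_mul]
  exact norm_inner_le_norm _ _

theorem le_epsHat_of_forall_exists (T : E →L[ℂ] E) {c : ℝ}
    (h : ∀ δ : ℝ, 0 < δ → ∃ x y : E, ⟪x, y⟫ = 0 ∧ (c - δ) * (‖T x‖ * ‖T y‖) < ‖⟪T x, T y⟫‖) :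
    c ≤ epsHat T := by
  refine le_csInf ⟨1, zero_le_one, le_rfl, isAOP_one T⟩ fun ε ⟨_, _, hε⟩ => ?_
  by_contra! hlt
  obtain ⟨x, y, hxy, hgt⟩ := h (c - ε) (sub_pos.mpr hlt)
  rw [sub_sub_cancel] at hgt
  exact (hε x y hxy).not_gt hgt

theorem exists_orthonormal_sub_mul_lt_norm_inner [CompleteSpace E] (hdim : 2 ≤ Module.rank ℂ E)
    (T : E →L[ℂ] E) (hm : 0 < minMod T) {δ : ℝ} (hδ : 0 < δ) :
    ∃ x y : E, ‖x‖ = 1 ∧ ‖y‖ = 1 ∧ ⟪x, y⟫ = 0 ∧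
      ((‖T‖ ^ 2 - minMod T ^ 2) / (‖T‖ ^ 2 + minMod T ^ 2) - δ) * (‖T x‖ * ‖T y‖)
        < ‖⟪T x, T y⟫‖ := by
  have hg : ContinuousAt (fun p : ℝ × ℝ => (p.1 - p.2) / (p.1 + p.2)) (‖T‖ ^ 2, minMod T ^ 2) :=
    (continuous_fst.sub continuous_snd).continuousAt.div
      (continuous_fst.add continuous_snd).continuousAt (by positivity)
  obtain ⟨_, ⟨e, f, he, hf, hef, rfl⟩, hk⟩ :=
    ((mem_closure_iff_frequently.mp (opNorm_sq_minMod_sq_mem_closure hdim T)).and_eventually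
      (hg.eventually (lt_mem_nhds (sub_lt_self _ hδ)))).exists
  obtain ⟨x, y, hx, hy, hxy, hineq⟩ := T.exists_orthonormal_norm_sq_sub_mul_le he hf hef
  have hsum : 0 < ‖T e‖ ^ 2 + ‖T f‖ ^ 2 := by
    have := hm.trans_le (minMod_le_norm_apply T he)
    positivity
  have hP : 0 < ‖T x‖ * ‖T y‖ :=
    mul_pos (hm.trans_le (minMod_le_norm_apply T hx)) (hm.trans_le (minMod_le_norm_apply T hy))
  refine ⟨x, y, hx, hy, hxy, (mul_lt_mul_of_pos_right hk hP).trans_le ?_⟩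
  rw [div_mul_eq_mul_div, div_le_iff₀ hsum, mul_comm ‖⟪T x, T y⟫‖]
  exact hineq

end MinimumModulus

/-- For `m(T) > 0`, the constant `(‖T‖² − m(T)²)/(‖T‖² + m(T)²)` is approached by orthogonal
unit vectors, and hence is a lower bound for `ε̂(T)`. -/
theorem epsHat_lower_bound (hdim : 2 ≤ Module.rank ℂ H) (T : H →L[ℂ] H)
    (hm : 0 < minMod T) :
    (∀ δ : ℝ, 0 < δ → ∃ x y : H, ‖x‖ = 1 ∧ ‖y‖ = 1 ∧ ⟪x, y⟫ = 0 ∧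
      ((‖T‖ ^ 2 - minMod T ^ 2) / (‖T‖ ^ 2 + minMod T ^ 2) - δ) * (‖T x‖ * ‖T y‖)
        < ‖⟪T x, T y⟫‖) ∧
    (‖T‖ ^ 2 - minMod T ^ 2) / (‖T‖ ^ 2 + minMod T ^ 2) ≤ epsHat T := by
  refine ⟨fun δ hδ => exists_orthonormal_sub_mul_lt_norm_inner hdim T hm hδ,
    le_epsHat_of_forall_exists T fun δ hδ => ?_⟩
  obtain ⟨x, y, -, -, hxy, hgt⟩ := exists_orthonormal_sub_mul_lt_norm_inner hdim T hm hδ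
  exact ⟨x, y, hxy, hgt⟩
end
end
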